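/- Let (Ω, F, π) be a probability space equipped with a ℤ^d-action by invertible measure-preserving transformations τ_z. Let v_k : Ω → ℝ (k ∈ E) be bounded measurable functions satisfying, for π-a.e. ω: v_k(ω) = −v_{−k}(τ_k ω) for all k ∈ E, and ∑_{k∈E} v_k(ω) = 0. Define A : L²(Ω, π) → L²(Ω, π) by (Af)(ω) := ∑_{k∈E} v_k(ω)(f(τ_k ω) − f(ω)). Then A is skew-symmetric: ∫_Ω (Af) g dπ = −∫_Ω f (Ag) dπ for all f, g ∈ L²(Ω, π). -/

import Mathlib

/-!
Because `∑ₖ vₖ = 0`, the terms `-f(ω)` drop out and `∫ (Af) g = ∑ₖ ∫ vₖ (f ∘ τₖ) g`, and likewise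
`∫ f (Ag) = ∑ₖ ∫ vₖ f (g ∘ τₖ)`. The substitution `ω ↦ τₖ ω`, which preserves `π`, together with
`v₋ₖ ∘ τₖ = -vₖ` turns the `k`-th term of the first sum into minus the `(-k)`-th term of the
second; summing over `E = -E` gives the claim.
-/

open MeasureTheory Filter Finset

open scoped Pointwise

noncomputable section

/-- The set `E` of the `2d` signed unit vectors of `ℤ^d`. -/
def unitVecs (d : ℕ) : Finset (Fin d → ℤ) :=
  Finset.image (fun p : Fin d × Bool =>
    fun j => if j = p.1 then (if p.2 then 1 else -1) else 0) Finset.univ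

lemma neg_mem_unitVecs {d : ℕ} {k : Fin d → ℤ} (hk : k ∈ unitVecs d) : -k ∈ unitVecs d := by
  simp only [unitVecs, mem_image, mem_univ, true_and] at hk ⊢
  obtain ⟨⟨i, b⟩, rfl⟩ := hk
  exact ⟨⟨i, !b⟩, by funext j; by_cases h : j = i <;> cases b <;> simp [h]⟩

lemma neg_unitVecs (d : ℕ) : -unitVecs d = unitVecs d := by
  ext k
  rw [Finset.mem_neg']
  exact ⟨fun hk => neg_neg k ▸ neg_mem_unitVecs hk, neg_mem_unitVecs⟩

lemma sum_mul_sub_of_sum_eq_zero {ι R : Type*} [CommRing R] {s : Finset ι} {v : ι → R}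
    (hv : ∑ k ∈ s, v k = 0) (F : ι → R) (c : R) :
    ∑ k ∈ s, v k * (F k - c) = ∑ k ∈ s, v k * F k := by
  simp only [mul_sub, sum_sub_distrib, ← sum_mul, hv, zero_mul, sub_zero]

lemma apply_neg_apply_of_add {G Ω : Type*} [AddGroup G] {τ : G → Ω → Ω} (hτzero : τ 0 = id)
    (hτadd : ∀ z w, τ (z + w) = τ z ∘ τ w) (z : G) (ω : Ω) : τ (-z) (τ z ω) = ω := by
  simpa [hτzero] using (congrFun (hτadd (-z) z) ω).symm

section

variable {Ω : Type*} [MeasurableSpace Ω] {μ : Measure Ω}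

lemma integrable_mul_mul_of_bdd_of_memLp_two {v f g : Ω → ℝ} (hv : AEStronglyMeasurable v μ)
    {B : ℝ} (hB : ∀ ω, |v ω| ≤ B) (hf : MemLp f 2 μ) (hg : MemLp g 2 μ) :
    Integrable (fun ω => v ω * (f ω * g ω)) μ :=
  (hf.integrable_mul hg).bdd_mul hv (Eventually.of_forall hB)

lemma integral_sum_mul_sub_mul {ι : Type*} {s : Finset ι} {v : ι → Ω → ℝ} {T : ι → Ω → Ω}
    {f g : Ω → ℝ} (hv : ∀ᵐ ω ∂μ, ∑ k ∈ s, v k ω = 0)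
    (hint : ∀ k ∈ s, Integrable (fun ω => v k ω * (f (T k ω) * g ω)) μ) :
    ∫ ω, (∑ k ∈ s, v k ω * (f (T k ω) - f ω)) * g ω ∂μ =
      ∑ k ∈ s, ∫ ω, v k ω * (f (T k ω) * g ω) ∂μ := by
  rw [← integral_finsetSum _ hint]
  refine integral_congr_ae ?_
  filter_upwards [hv] with ω hω
  simp only [sum_mul_sub_of_sum_eq_zero hω, sum_mul, mul_assoc]

lemma integral_mul_sum_mul_sub {ι : Type*} {s : Finset ι} {v : ι → Ω → ℝ} {T : ι → Ω → Ω}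
    {f g : Ω → ℝ} (hv : ∀ᵐ ω ∂μ, ∑ k ∈ s, v k ω = 0)
    (hint : ∀ k ∈ s, Integrable (fun ω => v k ω * (f ω * g (T k ω))) μ) :
    ∫ ω, f ω * (∑ k ∈ s, v k ω * (g (T k ω) - g ω)) ∂μ =
      ∑ k ∈ s, ∫ ω, v k ω * (f ω * g (T k ω)) ∂μ := by
  rw [← integral_finsetSum _ hint]
  refine integral_congr_ae ?_
  filter_upwards [hv] with ω hω
  simp only [sum_mul_sub_of_sum_eq_zero hω, mul_sum, mul_left_comm]

lemma integral_mul_comp_eq_neg_of_skew {T S : Ω → Ω} (hT : MeasurePreserving T μ μ)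
    (hST : ∀ ω, S (T ω) = ω) {a b f g : Ω → ℝ} (hab : ∀ᵐ ω ∂μ, a ω = -b (T ω))
    (hm : AEStronglyMeasurable (fun ω => b ω * (f ω * g (S ω))) μ) :
    ∫ ω, a ω * (f (T ω) * g ω) ∂μ = -∫ ω, b ω * (f ω * g (S ω)) ∂μ := by
  rw [← hT.map_eq] at hm
  calc ∫ ω, a ω * (f (T ω) * g ω) ∂μ
      = ∫ ω, -(b (T ω) * (f (T ω) * g (S (T ω)))) ∂μ := by
        refine integral_congr_ae ?_
        filter_upwards [hab] with ω hω
        rw [hST, hω]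
        ring
    _ = ∫ ω, -(b ω * (f ω * g (S ω))) ∂μ.map T := (integral_map hT.aemeasurable hm.neg).symm
    _ = -∫ ω, b ω * (f ω * g (S ω)) ∂μ := by rw [hT.map_eq, integral_neg]

end

theorem drift_operator_skew_symmetric_general
    {d : ℕ} {Ω : Type*} [MeasurableSpace Ω] (π : Measure Ω)
    (τ : (Fin d → ℤ) → Ω → Ω)
    (hτmp : ∀ z, MeasurePreserving (τ z) π π)
    (hτzero : τ 0 = id)
    (hτadd : ∀ z w, τ (z + w) = τ z ∘ τ w)
    (v : (Fin d → ℤ) → Ω → ℝ)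
    (hvmeas : ∀ k ∈ unitVecs d, Measurable (v k))
    (hvbdd : ∃ B : ℝ, ∀ k ∈ unitVecs d, ∀ ω, |v k ω| ≤ B)
    (hvskew : ∀ k ∈ unitVecs d, ∀ᵐ ω ∂π, v k ω = -v (-k) (τ k ω))
    (hvdiv : ∀ᵐ ω ∂π, ∑ k ∈ unitVecs d, v k ω = 0)
    (f g : Ω → ℝ) (hf : MemLp f 2 π) (hg : MemLp g 2 π) :
    ∫ ω, (∑ k ∈ unitVecs d, v k ω * (f (τ k ω) - f ω)) * g ω ∂π =
      -∫ ω, f ω * (∑ k ∈ unitVecs d, v k ω * (g (τ k ω) - g ω)) ∂π := by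
  obtain ⟨B, hB⟩ := hvbdd
  have hint : ∀ k ∈ unitVecs d, ∀ {φ ψ : Ω → ℝ}, MemLp φ 2 π → MemLp ψ 2 π →
      Integrable (fun ω => v k ω * (φ ω * ψ ω)) π := fun k hk _ _ =>
    integrable_mul_mul_of_bdd_of_memLp_two (hvmeas k hk).aestronglyMeasurable (hB k hk)
  have hshift : ∀ k, ∀ {φ : Ω → ℝ}, MemLp φ 2 π → MemLp (fun ω => φ (τ k ω)) 2 π :=
    fun k _ hφ => hφ.comp_measurePreserving (hτmp k)
  rw [integral_sum_mul_sub_mul (T := τ) hvdiv fun k hk => hint k hk (hshift k hf) hg,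
    integral_mul_sum_mul_sub (T := τ) hvdiv fun k hk => hint k hk hf (hshift k hg)]
  calc ∑ k ∈ unitVecs d, ∫ ω, v k ω * (f (τ k ω) * g ω) ∂π
      = ∑ k ∈ unitVecs d, -∫ ω, v (-k) ω * (f ω * g (τ (-k) ω)) ∂π :=
        sum_congr rfl fun k hk => integral_mul_comp_eq_neg_of_skew (hτmp k)
          (apply_neg_apply_of_add hτzero hτadd k) (hvskew k hk)
          (hint (-k) (neg_mem_unitVecs hk) hf (hshift (-k) hg)).aestronglyMeasurable
    _ = -∑ k ∈ unitVecs d, ∫ ω, v k ω * (f ω * g (τ k ω)) ∂π := by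
        rw [sum_neg_distrib, ← sum_neg_index (unitVecs d) fun k => ∫ ω, v k ω * (f ω * g (τ k ω)) ∂π,
          neg_unitVecs]

/-- **Skew-symmetry of the drift part of the generator (commutation relation (3.9)).**
If the bounded measurable functions `v_k` are skew-symmetric and divergence-free, then the
operator `(Af)(ω) = ∑_{k ∈ E} v_k(ω) (f(τ_k ω) - f(ω))` is skew-symmetric on `L²(Ω, π)`:
`∫ (Af) g dπ = -∫ f (Ag) dπ`. -/
theorem drift_operator_skew_symmetric
    {d : ℕ} {Ω : Type*} [MeasurableSpace Ω] (π : Measure Ω) [IsProbabilityMeasure π]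
    (τ : (Fin d → ℤ) → Ω → Ω)
    (hτmeas : ∀ z, Measurable (τ z))
    (hτmp : ∀ z, MeasurePreserving (τ z) π π)
    (hτzero : τ 0 = id)
    (hτadd : ∀ z w, τ (z + w) = τ z ∘ τ w)
    (v : (Fin d → ℤ) → Ω → ℝ)
    (hvmeas : ∀ k ∈ unitVecs d, Measurable (v k))
    (hvbdd : ∃ B : ℝ, ∀ k ∈ unitVecs d, ∀ ω, |v k ω| ≤ B)
    (hvskew : ∀ k ∈ unitVecs d, ∀ᵐ ω ∂π, v k ω = -v (-k) (τ k ω))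
    (hvdiv : ∀ᵐ ω ∂π, ∑ k ∈ unitVecs d, v k ω = 0)
    (f g : Ω → ℝ) (hf : MemLp f 2 π) (hg : MemLp g 2 π) :
    ∫ ω, (∑ k ∈ unitVecs d, v k ω * (f (τ k ω) - f ω)) * g ω ∂π =
      -∫ ω, f ω * (∑ k ∈ unitVecs d, v k ω * (g (τ k ω) - g ω)) ∂π :=
  drift_operator_skew_symmetric_general π τ hτmp hτzero hτadd v hvmeas hvbdd hvskew hvdiv f g hf hg
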